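/- arXiv:1301.4717 — 2 statements merged into one kernel-verified Lean document; each statement's English description precedes it below -/
import Mathlib

section
/- Under the hypotheses of the existence theorem for discrete gradient methods (conditions on f̃, ī, ĩ, î, ĭ with constants R, L, H on a bounded set B; R' := max{R, 10L}; H' := min{H, 1/(10L), 1/(6C₂R'), 1/((36C₂+6)L)}), for each x ∈ B with i(x) ≠ 0, each h ∈ [0,H') and each z ∈ B_{R'}(x), the map T(z) := x + h S̃(x,z,h) ī(x,z), with S̃(x,z,h) := (f̃(x,z,h) ĩ(x,z,h)ᵀ − ĩ(x,z,h) f̃(x,z,h)ᵀ)/(î(x,z,h)·ĭ(x,z,h)), satisfies |T(z) − x| ≤ 6 C₂ h |i(x)| ≤ |i(x)|/R'; in particular T maps B_{R'}(x) into itself. -/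
open scoped RealInnerProductSpace

noncomputable section

/-- Membership in the ball `B_R(x) = {z : ‖z − x‖ ≤ ‖i x‖ / R}`. -/
def InBall {d : ℕ} (i : EuclideanSpace ℝ (Fin d) → EuclideanSpace ℝ (Fin d)) (R : ℝ)
    (x z : EuclideanSpace ℝ (Fin d)) : Prop :=
  ‖z - x‖ ≤ ‖i x‖ / R

/-- The consistency and local Lipschitz conditions at the point `x` for an approximation
`g(·,·,·)` of `target` (conditions (11z)/(12z) of the paper, with balls measured via `i`). -/
def ConsistAt {d : ℕ} (i target : EuclideanSpace ℝ (Fin d) → EuclideanSpace ℝ (Fin d))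
    (x : EuclideanSpace ℝ (Fin d)) (R L H : ℝ)
    (g : EuclideanSpace ℝ (Fin d) → EuclideanSpace ℝ (Fin d) → ℝ → EuclideanSpace ℝ (Fin d)) :
    Prop :=
  g x x 0 = target x ∧
    ∀ h : ℝ, 0 ≤ h → h < H →
      (∀ u v w, InBall i R x u → InBall i R x v → InBall i R x w →
        ‖g u v h - g w v h‖ ≤ L * ‖u - w‖ ∧ ‖g u v h - g u w h‖ ≤ L * ‖v - w‖) ∧
      ‖g x x h - g x x 0‖ ≤ L * h * ‖i x‖

/-- The discrete gradient step equation `x' = x + h S̃(x,x',h) ī(x,x')`, where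
`S̃ = (f̃ ĩᵀ − ĩ f̃ᵀ)/(î·ĭ)`, so that
`S̃ ī = ((ĩ·ī) f̃ − (f̃·ī) ĩ)/(î·ĭ)`. -/
def DGEq {d : ℕ}
    (ftil itil ihat ibrev :
      EuclideanSpace ℝ (Fin d) → EuclideanSpace ℝ (Fin d) → ℝ → EuclideanSpace ℝ (Fin d))
    (ibar : EuclideanSpace ℝ (Fin d) → EuclideanSpace ℝ (Fin d) → EuclideanSpace ℝ (Fin d))
    (x : EuclideanSpace ℝ (Fin d)) (h : ℝ) (x' : EuclideanSpace ℝ (Fin d)) : Prop :=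
  x' = x + (h / ⟪ihat x x' h, ibrev x x' h⟫) •
    (⟪itil x x' h, ibar x x'⟫ • ftil x x' h - ⟪ftil x x' h, ibar x x'⟫ • itil x x' h)

/-- The map `T(z) := x + h S̃(x,z,h) ī(x,z)` of the contraction argument. -/
def Tmap {d : ℕ}
    (ftil itil ihat ibrev :
      EuclideanSpace ℝ (Fin d) → EuclideanSpace ℝ (Fin d) → ℝ → EuclideanSpace ℝ (Fin d))
    (ibar : EuclideanSpace ℝ (Fin d) → EuclideanSpace ℝ (Fin d) → EuclideanSpace ℝ (Fin d))
    (x z : EuclideanSpace ℝ (Fin d)) (h : ℝ) : EuclideanSpace ℝ (Fin d) :=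
  x + (h / ⟪ihat x z h, ibrev x z h⟫) •
    (⟪itil x z h, ibar x z⟫ • ftil x z h - ⟪ftil x z h, ibar x z⟫ • itil x z h)

/-!
On the ball `B_{R'}(x)` with `h < H'`, each of `f̃, ĩ, î, ĭ, ī` evaluated at `(x, z, h)` lies
within `‖i x‖/5` of its value at `(x, x, 0)`: the Lipschitz bound contributes `L‖z − x‖ ≤ ‖i x‖/10`
and the consistency bound `L h ‖i x‖ ≤ ‖i x‖/10`. Hence the denominator `î·ĭ` is at least
`(14/25)‖i x‖²`, while the numerator `(ĩ·ī) f̃ − (f̃·ī) ĩ` has norm at most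
`2‖f̃‖‖ĩ‖‖ī‖ ≤ (72/25) C₂ ‖i x‖³`, so `‖T z − x‖ ≤ (36/7) C₂ h ‖i x‖`.
-/

section InnerProduct

variable {E : Type*} [NormedAddCommGroup E] [InnerProductSpace ℝ E]

theorem sq_norm_sub_le_inner_of_norm_sub_le {v a b : E} {r : ℝ}
    (ha : ‖a - v‖ ≤ r) (hb : ‖b - v‖ ≤ r) :
    ‖v‖ ^ 2 - 2 * r * ‖v‖ - r ^ 2 ≤ ⟪a, b⟫ := by
  have hr : 0 ≤ r := (norm_nonneg _).trans ha
  have hexpand : ⟪a, b⟫ = ⟪v, v⟫ + ⟪v, b - v⟫ + ⟪a - v, v⟫ + ⟪a - v, b - v⟫ := by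
    simp only [inner_sub_left, inner_sub_right]; ring
  have h₁ : |⟪v, b - v⟫| ≤ ‖v‖ * r :=
    (abs_real_inner_le_norm _ _).trans (mul_le_mul_of_nonneg_left hb (norm_nonneg _))
  have h₂ : |⟪a - v, v⟫| ≤ r * ‖v‖ :=
    (abs_real_inner_le_norm _ _).trans (mul_le_mul_of_nonneg_right ha (norm_nonneg _))
  have h₃ : |⟪a - v, b - v⟫| ≤ r * r :=
    (abs_real_inner_le_norm _ _).trans (mul_le_mul ha hb (norm_nonneg _) hr)
  rw [hexpand, real_inner_self_eq_norm_sq]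
  linarith [neg_abs_le ⟪v, b - v⟫, neg_abs_le ⟪a - v, v⟫, neg_abs_le ⟪a - v, b - v⟫]

theorem norm_inner_smul_sub_inner_smul_le (a c w : E) :
    ‖⟪c, w⟫ • a - ⟪a, w⟫ • c‖ ≤ 2 * (‖a‖ * ‖c‖ * ‖w‖) := by
  have h₁ : ‖⟪c, w⟫ • a‖ ≤ ‖a‖ * ‖c‖ * ‖w‖ := by
    rw [norm_smul, Real.norm_eq_abs]
    nlinarith [abs_real_inner_le_norm c w, norm_nonneg a]
  have h₂ : ‖⟪a, w⟫ • c‖ ≤ ‖a‖ * ‖c‖ * ‖w‖ := by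
    rw [norm_smul, Real.norm_eq_abs]
    nlinarith [abs_real_inner_le_norm a w, norm_nonneg c]
  linarith [norm_sub_le (⟪c, w⟫ • a) (⟪a, w⟫ • c)]

theorem norm_div_inner_smul_antisymm_le {v p q a c w : E} {C h : ℝ} (hv : v ≠ 0) (hh : 0 ≤ h)
    (hp : ‖p - v‖ ≤ ‖v‖ / 5) (hq : ‖q - v‖ ≤ ‖v‖ / 5) (ha : ‖a‖ ≤ C * ‖v‖)
    (hc : ‖c - v‖ ≤ ‖v‖ / 5) (hw : ‖w - v‖ ≤ ‖v‖ / 5) :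
    ‖(h / ⟪p, q⟫) • (⟪c, w⟫ • a - ⟪a, w⟫ • c)‖ ≤ 6 * C * h * ‖v‖ := by
  have hn : 0 < ‖v‖ := norm_pos_iff.mpr hv
  have hC : 0 ≤ C := nonneg_of_mul_nonneg_left ((norm_nonneg a).trans ha) hn
  have hden : 14 / 25 * ‖v‖ ^ 2 ≤ ⟪p, q⟫ := by
    linarith [sq_norm_sub_le_inner_of_norm_sub_le hp hq]
  have hc' : ‖c‖ ≤ 6 / 5 * ‖v‖ := by linarith [norm_le_norm_add_norm_sub' c v]
  have hw' : ‖w‖ ≤ 6 / 5 * ‖v‖ := by linarith [norm_le_norm_add_norm_sub' w v]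
  have hnum : ‖⟪c, w⟫ • a - ⟪a, w⟫ • c‖ ≤ 72 / 25 * C * ‖v‖ ^ 3 := by
    have hacw : ‖a‖ * ‖c‖ * ‖w‖ ≤ C * ‖v‖ * (6 / 5 * ‖v‖) * (6 / 5 * ‖v‖) := by gcongr
    linarith [norm_inner_smul_sub_inner_smul_le a c w]
  have hden_pos : 0 < ⟪p, q⟫ := lt_of_lt_of_le (by positivity) hden
  rw [norm_smul, Real.norm_eq_abs, abs_of_nonneg (div_nonneg hh hden_pos.le)]
  calc h / ⟪p, q⟫ * ‖⟪c, w⟫ • a - ⟪a, w⟫ • c‖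
      ≤ h / (14 / 25 * ‖v‖ ^ 2) * (72 / 25 * C * ‖v‖ ^ 3) := by gcongr
    _ = 36 / 7 * C * h * ‖v‖ := by field_simp; ring
    _ ≤ 6 * C * h * ‖v‖ := by gcongr; norm_num

end InnerProduct

section Ball

variable {d : ℕ} {i : EuclideanSpace ℝ (Fin d) → EuclideanSpace ℝ (Fin d)}
  {x z : EuclideanSpace ℝ (Fin d)} {R L : ℝ}

theorem InBall.self (hR : 0 ≤ R) : InBall i R x x := by
  simp only [InBall, sub_self, norm_zero]
  positivity

theorem InBall.of_le {R' : ℝ} (hR : 0 < R) (hRR' : R ≤ R') (hz : InBall i R' x z) :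
    InBall i R x z :=
  hz.trans (div_le_div_of_nonneg_left (norm_nonneg _) hR hRR')

theorem InBall.mul_norm_sub_le (hL : 0 < L) (hz : InBall i (10 * L) x z) :
    L * ‖z - x‖ ≤ ‖i x‖ / 10 := by
  calc L * ‖z - x‖ ≤ L * (‖i x‖ / (10 * L)) := mul_le_mul_of_nonneg_left hz hL.le
    _ = ‖i x‖ / 10 := by field_simp

theorem ConsistAt.norm_apply_sub_le {target : EuclideanSpace ℝ (Fin d) → EuclideanSpace ℝ (Fin d)}
    {H h : ℝ}
    {g : EuclideanSpace ℝ (Fin d) → EuclideanSpace ℝ (Fin d) → ℝ → EuclideanSpace ℝ (Fin d)}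
    (hg : ConsistAt i target x R L H g) (hR : 0 ≤ R) (h0 : 0 ≤ h) (hH : h < H)
    (hz : InBall i R x z) :
    ‖g x z h - target x‖ ≤ L * ‖z - x‖ + L * h * ‖i x‖ := by
  obtain ⟨hdiag, hbounds⟩ := hg
  obtain ⟨hlip, hcons⟩ := hbounds h h0 hH
  calc ‖g x z h - target x‖ ≤ ‖g x z h - g x x h‖ + ‖g x x h - g x x 0‖ := by
        rw [← hdiag]; exact norm_sub_le_norm_sub_add_norm_sub _ _ _
    _ ≤ L * ‖z - x‖ + L * h * ‖i x‖ :=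
        add_le_add (hlip x z x (.self hR) hz (.self hR)).2 hcons

theorem ConsistAt.norm_apply_sub_le_fifth
    {target : EuclideanSpace ℝ (Fin d) → EuclideanSpace ℝ (Fin d)} {H h : ℝ}
    {g : EuclideanSpace ℝ (Fin d) → EuclideanSpace ℝ (Fin d) → ℝ → EuclideanSpace ℝ (Fin d)}
    (hg : ConsistAt i target x R L H g) (hR : 0 ≤ R) (hL : 0 < L) (h0 : 0 ≤ h) (hH : h < H)
    (h10 : h < 1 / (10 * L)) (hz : InBall i R x z) (hz10 : InBall i (10 * L) x z) :
    ‖g x z h - target x‖ ≤ ‖i x‖ / 5 := by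
  have hLh : L * h ≤ 1 / 10 := by
    rw [lt_div_iff₀ (by positivity)] at h10
    linarith
  have hcons : L * h * ‖i x‖ ≤ ‖i x‖ / 10 := by nlinarith [norm_nonneg (i x)]
  linarith [hg.norm_apply_sub_le hR h0 hH hz, hz10.mul_norm_sub_le hL]

end Ball

theorem discrete_gradient_Tmap_maps_ball_into_itself_general {d : ℕ}
    (f : EuclideanSpace ℝ (Fin d) → EuclideanSpace ℝ (Fin d))
    (i : EuclideanSpace ℝ (Fin d) → EuclideanSpace ℝ (Fin d))
    (B : Set (EuclideanSpace ℝ (Fin d)))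
    (C₁ : ℝ) (hC₁ : 0 < C₁) (hfC : ∀ x ∈ B, ‖f x‖ ≤ C₁ * ‖i x‖)
    (R L H : ℝ) (hR : 0 < R) (hL : 0 < L)
    (ftil itil ihat ibrev :
      EuclideanSpace ℝ (Fin d) → EuclideanSpace ℝ (Fin d) → ℝ → EuclideanSpace ℝ (Fin d))
    (ibar : EuclideanSpace ℝ (Fin d) → EuclideanSpace ℝ (Fin d) → EuclideanSpace ℝ (Fin d))
    (hftil : ∀ x ∈ B, ConsistAt i f x R L H ftil)
    (hitil : ∀ x ∈ B, ConsistAt i i x R L H itil)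
    (hihat : ∀ x ∈ B, ConsistAt i i x R L H ihat)
    (hibrev : ∀ x ∈ B, ConsistAt i i x R L H ibrev)
    (hibar_diag : ∀ x : EuclideanSpace ℝ (Fin d), ibar x x = i x)
    (hibar_lip : ∀ x ∈ B, ∀ u v w : EuclideanSpace ℝ (Fin d),
      InBall i R x u → InBall i R x v → InBall i R x w →
      ‖ibar u v - ibar w v‖ ≤ L * ‖u - w‖ ∧ ‖ibar u v - ibar u w‖ ≤ L * ‖v - w‖)
    (R' H' : ℝ) (hR' : R' = max R (10 * L))
    (hH' : H' = min H (min (1 / (10 * L))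
      (min (1 / (6 * (C₁ + 1/5) * R')) (1 / ((36 * (C₁ + 1/5) + 6) * L)))))
    (x : EuclideanSpace ℝ (Fin d)) (hxB : x ∈ B) (hix : i x ≠ 0)
    (h : ℝ) (hh0 : 0 ≤ h) (hhH : h < H')
    (z : EuclideanSpace ℝ (Fin d)) (hz : InBall i R' x z) :
    ‖Tmap ftil itil ihat ibrev ibar x z h - x‖ ≤ 6 * (C₁ + 1/5) * h * ‖i x‖ ∧
      6 * (C₁ + 1/5) * h * ‖i x‖ ≤ ‖i x‖ / R' := by
  rw [hH', lt_min_iff, lt_min_iff, lt_min_iff] at hhH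
  obtain ⟨hhH, hh10, hhR', -⟩ := hhH
  have hR'pos : 0 < R' := hR'.symm ▸ lt_max_of_lt_left hR
  have hzR : InBall i R x z := hz.of_le hR (hR' ▸ le_max_left _ _)
  have hz10 : InBall i (10 * L) x z := hz.of_le (by positivity) (hR' ▸ le_max_right _ _)
  have near : ∀ target g, ConsistAt i target x R L H g → ‖g x z h - target x‖ ≤ ‖i x‖ / 5 :=
    fun _ _ hg => hg.norm_apply_sub_le_fifth hR.le hL hh0 hhH hh10 hzR hz10
  have hibar : ‖ibar x z - i x‖ ≤ ‖i x‖ / 5 := by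
    have hlip := (hibar_lip x hxB x z x (.self hR.le) hzR (.self hR.le)).2
    rw [hibar_diag] at hlip
    linarith [hz10.mul_norm_sub_le hL, norm_nonneg (i x)]
  have hftil_norm : ‖ftil x z h‖ ≤ (C₁ + 1/5) * ‖i x‖ := by
    linarith [norm_le_norm_add_norm_sub' (ftil x z h) (f x), near _ _ (hftil x hxB), hfC x hxB]
  constructor
  · rw [Tmap, add_sub_cancel_left]
    exact norm_div_inner_smul_antisymm_le hix hh0 (near _ _ (hihat x hxB))
      (near _ _ (hibrev x hxB)) hftil_norm (near _ _ (hitil x hxB)) hibar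
  · rw [le_div_iff₀ hR'pos]
    have : h * (6 * (C₁ + 1/5) * R') < 1 := (lt_div_iff₀ (by positivity)).1 hhR'
    nlinarith [norm_nonneg (i x)]

/-- `T` maps `B_{R′}(x)` into itself: `‖T z − x‖ ≤ 6C₂h‖i x‖ ≤ ‖i x‖/R′`. -/
theorem discrete_gradient_Tmap_maps_ball_into_itself {d : ℕ}
    (f : EuclideanSpace ℝ (Fin d) → EuclideanSpace ℝ (Fin d))
    (I : EuclideanSpace ℝ (Fin d) → ℝ)
    (i : EuclideanSpace ℝ (Fin d) → EuclideanSpace ℝ (Fin d))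
    (hgrad : ∀ x, HasGradientAt I (i x) x)
    (B : Set (EuclideanSpace ℝ (Fin d))) (hB : Bornology.IsBounded B)
    (C₁ : ℝ) (hC₁ : 0 < C₁) (hfC : ∀ x ∈ B, ‖f x‖ ≤ C₁ * ‖i x‖)
    (R L H : ℝ) (hR : 0 < R) (hL : 0 < L) (hH : 0 < H)
    (ftil itil ihat ibrev :
      EuclideanSpace ℝ (Fin d) → EuclideanSpace ℝ (Fin d) → ℝ → EuclideanSpace ℝ (Fin d))
    (ibar : EuclideanSpace ℝ (Fin d) → EuclideanSpace ℝ (Fin d) → EuclideanSpace ℝ (Fin d))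
    (hftil : ∀ x ∈ B, ConsistAt i f x R L H ftil)
    (hitil : ∀ x ∈ B, ConsistAt i i x R L H itil)
    (hihat : ∀ x ∈ B, ConsistAt i i x R L H ihat)
    (hibrev : ∀ x ∈ B, ConsistAt i i x R L H ibrev)
    (hibar_cont : Continuous (fun q : EuclideanSpace ℝ (Fin d) × EuclideanSpace ℝ (Fin d) =>
      ibar q.1 q.2))
    (hibar_dg : ∀ x x' : EuclideanSpace ℝ (Fin d), ⟪ibar x x', x' - x⟫ = I x' - I x)
    (hibar_diag : ∀ x : EuclideanSpace ℝ (Fin d), ibar x x = i x)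
    (hibar_lip : ∀ x ∈ B, ∀ u v w : EuclideanSpace ℝ (Fin d),
      InBall i R x u → InBall i R x v → InBall i R x w →
      ‖ibar u v - ibar w v‖ ≤ L * ‖u - w‖ ∧ ‖ibar u v - ibar u w‖ ≤ L * ‖v - w‖)
    (R' H' : ℝ) (hR' : R' = max R (10 * L))
    (hH' : H' = min H (min (1 / (10 * L))
      (min (1 / (6 * (C₁ + 1/5) * R')) (1 / ((36 * (C₁ + 1/5) + 6) * L)))))
    (x : EuclideanSpace ℝ (Fin d)) (hxB : x ∈ B) (hix : i x ≠ 0)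
    (h : ℝ) (hh0 : 0 ≤ h) (hhH : h < H')
    (z : EuclideanSpace ℝ (Fin d)) (hz : InBall i R' x z) :
    ‖Tmap ftil itil ihat ibrev ibar x z h - x‖ ≤ 6 * (C₁ + 1/5) * h * ‖i x‖ ∧
      6 * (C₁ + 1/5) * h * ‖i x‖ ≤ ‖i x‖ / R' :=
  discrete_gradient_Tmap_maps_ball_into_itself_general f i B C₁ hC₁ hfC R L H hR hL ftil itil ihat
    ibrev ibar hftil hitil hihat hibrev hibar_diag hibar_lip R' H' hR' hH' x hxB hix h hh0 hhH z hz
end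
end

section
/- Let f̃(x,h) := Σ_{i=1}^s bᵢ kᵢ(x,h), where k₁(x,h),…,k_s(x,h) are the stages of an s-stage Runge–Kutta method with Σ_{i=1}^s bᵢ = 1, i.e. kᵢ(x,h) = f(x + hΣⱼaᵢⱼkⱼ(x,h)). Let B ⊂ ℝ^d be bounded, R₀ > 0, and let L₀ satisfy |f(u)−f(v)| ≤ L₀|u−v| and |i(u)−i(v)| ≤ L₀|u−v| for all x ∈ B, u,v ∈ B_{R₀}(x), and |f(x)| ≤ C₁|i(x)| on B. Set A₁ := maxᵢΣⱼ|aᵢⱼ|, A₂ := Σᵢ|bᵢ|, R := 2R₀, L := L₀A₂·max{2, A₁(C₁ + L₀/R₀)}, and H := min{1/(2L₀A₁), 1/(2A₁(C₁+L₀/R₀)R₀), 1/(2L₀A₁(C₁+L₀/R₀)R₀)}. Then f̃(x,0) = f(x) for every x ∈ B, and for each x ∈ B, all u, v ∈ B_R(x) and h ∈ [0,H): |f̃(u,h) − f̃(v,h)| ≤ L|u−v| and |f̃(x,h) − f̃(x,0)| ≤ Lh|i(x)|. -/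
/-!
For base points `u, v` the stage differences satisfy `kⱼ − lⱼ = f(Uⱼ) − f(Vⱼ)` with
`‖Uⱼ − Vⱼ‖ ≤ ‖u − v‖ + h A₁ maxₗ ‖kₗ − lₗ‖`. As long as all stage points lie in `B_{R₀}(x)`,
where `f` is `L₀`-Lipschitz, the smallness `2 L₀ h A₁ < 1` lets the largest stage difference
absorb itself, so every stage is `2L₀`-Lipschitz in the base point. The stage points do stay in
`B_{R₀}(x)`: the stages are bounded by `(C₁ + L₀/R₀)‖i x‖`, so they move a base point of
`B_{2R₀}(x)` by at most `‖i x‖/(2R₀)` when `h (2 A₁ (C₁ + L₀/R₀) R₀) < 1`. The same bound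
gives `‖kⱼ(x,h) − f x‖ ≤ L₀ h A₁ (C₁ + L₀/R₀)‖i x‖`, hence consistency, and `Σ bⱼ = 1` gives
`f̃(x,0) = f x`.
-/

open scoped RealInnerProductSpace

noncomputable section

open Finset

section RungeKuttaStages

variable {E ι : Type*} [NormedAddCommGroup E] [NormedSpace ℝ E] [Fintype ι]

def rkStagePoint (a : ι → ι → ℝ) (h : ℝ) (u : E) (k : ι → E) (i : ι) : E :=
  u + h • ∑ j, a i j • k j

theorem norm_sum_smul_le_of_norm_le (c : ι → ℝ) {v : ι → E} {M : ℝ} (hv : ∀ j, ‖v j‖ ≤ M) :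
    ‖∑ j, c j • v j‖ ≤ (∑ j, |c j|) * M := by
  calc ‖∑ j, c j • v j‖ ≤ ∑ j, |c j| * ‖v j‖ := by
        simpa only [norm_smul, Real.norm_eq_abs] using norm_sum_le univ fun j => c j • v j
    _ ≤ ∑ j, |c j| * M := by gcongr with j; exact hv j
    _ = (∑ j, |c j|) * M := (sum_mul ..).symm

theorem norm_sum_smul_sub_sum_smul_le (c : ι → ℝ) {v w : ι → E} {M : ℝ}
    (hvw : ∀ j, ‖v j - w j‖ ≤ M) :
    ‖∑ j, c j • v j - ∑ j, c j • w j‖ ≤ (∑ j, |c j|) * M := by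
  simpa only [← sum_sub_distrib, ← smul_sub] using norm_sum_smul_le_of_norm_le c hvw

theorem norm_rkStagePoint_sub_le {a : ι → ι → ℝ} {h A M : ℝ} {u v : E} {k l : ι → E} {i : ι}
    (hh : 0 ≤ h) (hA : ∑ j, |a i j| ≤ A) (hM : 0 ≤ M) (hkl : ∀ j, ‖k j - l j‖ ≤ M) :
    ‖rkStagePoint a h u k i - rkStagePoint a h v l i‖ ≤ ‖u - v‖ + h * (A * M) := by
  have hsplit : rkStagePoint a h u k i - rkStagePoint a h v l i
      = (u - v) + h • (∑ j, a i j • k j - ∑ j, a i j • l j) := by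
    simp only [rkStagePoint, smul_sub]; abel
  rw [hsplit]
  refine (norm_add_le _ _).trans ?_
  rw [norm_smul, Real.norm_of_nonneg hh]
  gcongr
  exact (norm_sum_smul_sub_sum_smul_le _ hkl).trans (by gcongr)

theorem norm_rkStagePoint_sub_self_le {a : ι → ι → ℝ} {h A M : ℝ} {u : E} {k : ι → E} {i : ι}
    (hh : 0 ≤ h) (hA : ∑ j, |a i j| ≤ A) (hM : 0 ≤ M) (hk : ∀ j, ‖k j‖ ≤ M) :
    ‖rkStagePoint a h u k i - u‖ ≤ h * (A * M) := by
  simpa [rkStagePoint] using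
    norm_rkStagePoint_sub_le (u := u) (v := u) (l := 0) hh hA hM (by simpa using hk)

theorem norm_stage_sub_le_of_contraction {f : E → E} {a : ι → ι → ℝ} {h A L₀ : ℝ} {u v : E}
    {k l : ι → E} (hh : 0 ≤ h) (hL₀ : 0 ≤ L₀) (hrow : ∀ i, ∑ j, |a i j| ≤ A)
    (hsmall : 2 * L₀ * h * A ≤ 1)
    (hk : ∀ i, k i = f (rkStagePoint a h u k i)) (hl : ∀ i, l i = f (rkStagePoint a h v l i))
    (hf : ∀ i, ‖f (rkStagePoint a h u k i) - f (rkStagePoint a h v l i)‖ ≤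
      L₀ * ‖rkStagePoint a h u k i - rkStagePoint a h v l i‖)
    (i : ι) : ‖k i - l i‖ ≤ 2 * L₀ * ‖u - v‖ := by
  have : Nonempty ι := ⟨i⟩
  obtain ⟨m, hm⟩ := Finite.exists_max fun j => ‖k j - l j‖
  set M := ‖k m - l m‖ with hM
  have hM0 : 0 ≤ M := norm_nonneg _
  have hMle : M ≤ L₀ * ‖u - v‖ + L₀ * h * A * M :=
    calc M = ‖f (rkStagePoint a h u k m) - f (rkStagePoint a h v l m)‖ := by
          rw [hM, ← hk m, ← hl m]
      _ ≤ L₀ * (‖u - v‖ + h * (A * M)) :=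
          (hf m).trans (by gcongr; exact norm_rkStagePoint_sub_le hh (hrow m) hM0 hm)
      _ = L₀ * ‖u - v‖ + L₀ * h * A * M := by ring
  have hhalf : 2 * L₀ * h * A * M ≤ M := mul_le_of_le_one_left hM0 hsmall
  linarith [hm i]

theorem norm_stage_sub_le_of_lipschitz {f : E → E} {a : ι → ι → ℝ} {h A L₀ M : ℝ} {x : E}
    {k : ι → E} (hh : 0 ≤ h) (hL₀ : 0 ≤ L₀) (hrow : ∀ i, ∑ j, |a i j| ≤ A) (hM : 0 ≤ M)
    (hkM : ∀ i, ‖k i‖ ≤ M) (hk : ∀ i, k i = f (rkStagePoint a h x k i))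
    (hf : ∀ i, ‖f (rkStagePoint a h x k i) - f x‖ ≤ L₀ * ‖rkStagePoint a h x k i - x‖) (i : ι) :
    ‖k i - f x‖ ≤ L₀ * (h * (A * M)) := by
  rw [hk i]
  exact (hf i).trans (by gcongr; exact norm_rkStagePoint_sub_self_le hh (hrow i) hM hkM)

end RungeKuttaStages

theorem mul_lt_one_of_lt_one_div {h t : ℝ} (hh : 0 ≤ h) (hht : h < 1 / t) : h * t < 1 := by
  rcases lt_or_ge 0 t with ht | ht
  · exact (lt_div_iff₀ ht).mp hht
  · linarith [mul_nonpos_of_nonneg_of_nonpos hh ht]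

section InBall

variable {d : ℕ} {i : EuclideanSpace ℝ (Fin d) → EuclideanSpace ℝ (Fin d)}
  {x : EuclideanSpace ℝ (Fin d)}

theorem inBall_self {R : ℝ} (hR : 0 ≤ R) : InBall i R x x := by
  simp only [InBall, sub_self, norm_zero]
  positivity

theorem inBall_rkStagePoint {ι : Type*} [Fintype ι] {a : ι → ι → ℝ}
    {k : ι → EuclideanSpace ℝ (Fin d)} {u : EuclideanSpace ℝ (Fin d)} {R₀ h A c : ℝ}
    (hR₀ : 0 < R₀) (hh : 0 ≤ h)
    (hsmall : h * (2 * A * c * R₀) < 1) (hrow : ∀ j, ∑ l, |a j l| ≤ A)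
    (hk : ∀ j, ‖k j‖ ≤ c * ‖i x‖) (hu : InBall i (2 * R₀) x u) (j : ι) :
    InBall i R₀ x (rkStagePoint a h u k j) := by
  have hc : 0 ≤ c * ‖i x‖ := (norm_nonneg _).trans (hk j)
  have hstep : h * (A * (c * ‖i x‖)) ≤ ‖i x‖ / (2 * R₀) := by
    rw [le_div_iff₀ (by positivity)]
    nlinarith [norm_nonneg (i x)]
  calc ‖rkStagePoint a h u k j - x‖ ≤ ‖rkStagePoint a h u k j - u‖ + ‖u - x‖ :=
        norm_sub_le_norm_sub_add_norm_sub _ _ _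
    _ ≤ ‖i x‖ / (2 * R₀) + ‖i x‖ / (2 * R₀) :=
        add_le_add ((norm_rkStagePoint_sub_self_le hh (hrow j) hc hk).trans hstep) hu
    _ = ‖i x‖ / R₀ := by field_simp; ring

end InBall

theorem runge_kutta_ftil_consistency_lipschitz_general {d s : ℕ}
    (f : EuclideanSpace ℝ (Fin d) → EuclideanSpace ℝ (Fin d))
    (i : EuclideanSpace ℝ (Fin d) → EuclideanSpace ℝ (Fin d))
    (B : Set (EuclideanSpace ℝ (Fin d)))
    (R₀ L₀ C₁ : ℝ) (hR₀ : 0 < R₀) (hL₀ : 0 < L₀)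
    (hflip : ∀ x ∈ B, ∀ u v : EuclideanSpace ℝ (Fin d),
      InBall i R₀ x u → InBall i R₀ x v → ‖f u - f v‖ ≤ L₀ * ‖u - v‖)
    (hfC : ∀ x ∈ B, ‖f x‖ ≤ C₁ * ‖i x‖)
    (a : Fin s → Fin s → ℝ) (b : Fin s → ℝ) (hb : ∑ idx : Fin s, b idx = 1)
    (A₁ A₂ : ℝ) (hA₁ : A₁ = ⨆ idx : Fin s, ∑ j : Fin s, |a idx j|)
    (hA₂ : A₂ = ∑ idx : Fin s, |b idx|)
    (R L H : ℝ) (hRdef : R = 2 * R₀)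
    (hLdef : L = L₀ * A₂ * max 2 (A₁ * (C₁ + L₀ / R₀)))
    (hHdef : H = min (1 / (2 * L₀ * A₁))
      (min (1 / (2 * A₁ * (C₁ + L₀ / R₀) * R₀)) (1 / (2 * L₀ * A₁ * (C₁ + L₀ / R₀) * R₀))))
    (K : EuclideanSpace ℝ (Fin d) → ℝ → Fin s → EuclideanSpace ℝ (Fin d))
    (hK : ∀ x ∈ B, ∀ h : ℝ, 0 ≤ h → h < H →
      ∀ u : EuclideanSpace ℝ (Fin d), InBall i (2 * R₀) x u →
        (∀ idx : Fin s, ‖K u h idx - f x‖ ≤ L₀ * ‖i x‖ / R₀) ∧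
        ∀ idx : Fin s, K u h idx = f (u + h • ∑ j : Fin s, a idx j • K u h j))
    (hK0 : ∀ x ∈ B, ∀ u : EuclideanSpace ℝ (Fin d), InBall i (2 * R₀) x u →
      ∀ idx : Fin s, K u 0 idx = f u)
    (ftil : EuclideanSpace ℝ (Fin d) → ℝ → EuclideanSpace ℝ (Fin d))
    (hftil : ∀ (u : EuclideanSpace ℝ (Fin d)) (h : ℝ), ftil u h = ∑ idx : Fin s, b idx • K u h idx) :
    (∀ x ∈ B, ftil x 0 = f x) ∧
    ∀ x ∈ B, ∀ h : ℝ, 0 ≤ h → h < H →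
      (∀ u v : EuclideanSpace ℝ (Fin d), InBall i R x u → InBall i R x v →
        ‖ftil u h - ftil v h‖ ≤ L * ‖u - v‖) ∧
      ‖ftil x h - ftil x 0‖ ≤ L * h * ‖i x‖ := by
  have hrow : ∀ j, ∑ l, |a j l| ≤ A₁ := fun j => by
    rw [hA₁]; exact le_ciSup (Finite.bddAbove_range fun j => ∑ l, |a j l|) j
  have hLA : 0 ≤ L₀ * A₂ := mul_nonneg hL₀.le (hA₂ ▸ sum_nonneg fun j _ => abs_nonneg (b j))
  have hx2 : ∀ {x}, InBall i (2 * R₀) x x := inBall_self (by positivity)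
  refine ⟨fun x hx => ?_, fun x hx h hh hhH => ?_⟩
  · rw [hftil, sum_congr rfl fun j _ => by rw [hK0 x hx x hx2 j], ← sum_smul, hb, one_smul]
  set c := C₁ + L₀ / R₀
  have hsmall₁ : h * (2 * L₀ * A₁) < 1 :=
    mul_lt_one_of_lt_one_div hh (hhH.trans_le (hHdef ▸ min_le_left _ _))
  have hsmall₂ : h * (2 * A₁ * c * R₀) < 1 :=
    mul_lt_one_of_lt_one_div hh
      (hhH.trans_le (hHdef ▸ (min_le_right _ _).trans (min_le_left _ _)))
  have hKc : ∀ u, InBall i (2 * R₀) x u → ∀ j, ‖K u h j‖ ≤ c * ‖i x‖ := fun u hu j =>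
    calc ‖K u h j‖ ≤ ‖f x‖ + ‖K u h j - f x‖ := norm_le_norm_add_norm_sub' _ _
      _ ≤ C₁ * ‖i x‖ + L₀ * ‖i x‖ / R₀ := add_le_add (hfC x hx) ((hK x hx h hh hhH u hu).1 j)
      _ = c * ‖i x‖ := by ring
  have hpt : ∀ u, InBall i (2 * R₀) x u → ∀ j, InBall i R₀ x (rkStagePoint a h u (K u h) j) :=
    fun u hu => inBall_rkStagePoint hR₀ hh hsmall₂ hrow (hKc u hu) hu
  constructor
  · intro u v hu hv
    rw [hRdef] at hu hv
    have hstage := norm_stage_sub_le_of_contraction hh hL₀.le hrow (by linarith)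
      (hK x hx h hh hhH u hu).2 (hK x hx h hh hhH v hv).2
      (fun j => hflip x hx _ _ (hpt u hu j) (hpt v hv j))
    calc ‖ftil u h - ftil v h‖ ≤ A₂ * (2 * L₀ * ‖u - v‖) := by
          rw [hftil, hftil, hA₂]; exact norm_sum_smul_sub_sum_smul_le b hstage
      _ = L₀ * A₂ * 2 * ‖u - v‖ := by ring
      _ ≤ L * ‖u - v‖ := by
          rw [hLdef]; gcongr; exact le_max_left _ _
  · have hstage : ∀ j, ‖K x h j - K x 0 j‖ ≤ L₀ * (h * (A₁ * (c * ‖i x‖))) := fun j => by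
      rw [hK0 x hx x hx2 j]
      exact norm_stage_sub_le_of_lipschitz hh hL₀.le hrow ((norm_nonneg _).trans (hKc x hx2 j))
        (hKc x hx2) (hK x hx h hh hhH x hx2).2
        (fun l => hflip x hx _ _ (hpt x hx2 l) (inBall_self hR₀.le)) j
    calc ‖ftil x h - ftil x 0‖ ≤ A₂ * (L₀ * (h * (A₁ * (c * ‖i x‖)))) := by
          rw [hftil, hftil, hA₂]; exact norm_sum_smul_sub_sum_smul_le b hstage
      _ = L₀ * A₂ * (A₁ * c) * h * ‖i x‖ := by ring
      _ ≤ L * h * ‖i x‖ := by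
          rw [hLdef]; gcongr; exact le_max_right _ _

/-- Lemma: `f̃` built from a consistent Runge–Kutta method satisfies the
consistency and Lipschitz conditions. -/
theorem runge_kutta_ftil_consistency_lipschitz {d s : ℕ}
    (f : EuclideanSpace ℝ (Fin d) → EuclideanSpace ℝ (Fin d))
    (I : EuclideanSpace ℝ (Fin d) → ℝ)
    (i : EuclideanSpace ℝ (Fin d) → EuclideanSpace ℝ (Fin d))
    (hgrad : ∀ x, HasGradientAt I (i x) x)
    (B : Set (EuclideanSpace ℝ (Fin d))) (hB : Bornology.IsBounded B)
    (R₀ L₀ C₁ : ℝ) (hR₀ : 0 < R₀) (hL₀ : 0 < L₀) (hC₁ : 0 < C₁)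
    (hflip : ∀ x ∈ B, ∀ u v : EuclideanSpace ℝ (Fin d),
      InBall i R₀ x u → InBall i R₀ x v → ‖f u - f v‖ ≤ L₀ * ‖u - v‖)
    (hilip : ∀ x ∈ B, ∀ u v : EuclideanSpace ℝ (Fin d),
      InBall i R₀ x u → InBall i R₀ x v → ‖i u - i v‖ ≤ L₀ * ‖u - v‖)
    (hfC : ∀ x ∈ B, ‖f x‖ ≤ C₁ * ‖i x‖)
    (a : Fin s → Fin s → ℝ) (b : Fin s → ℝ) (hb : ∑ idx : Fin s, b idx = 1)
    (A₁ A₂ : ℝ) (hA₁ : A₁ = ⨆ idx : Fin s, ∑ j : Fin s, |a idx j|)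
    (hA₂ : A₂ = ∑ idx : Fin s, |b idx|)
    (R L H : ℝ) (hRdef : R = 2 * R₀)
    (hLdef : L = L₀ * A₂ * max 2 (A₁ * (C₁ + L₀ / R₀)))
    (hHdef : H = min (1 / (2 * L₀ * A₁))
      (min (1 / (2 * A₁ * (C₁ + L₀ / R₀) * R₀)) (1 / (2 * L₀ * A₁ * (C₁ + L₀ / R₀) * R₀))))
    (K : EuclideanSpace ℝ (Fin d) → ℝ → Fin s → EuclideanSpace ℝ (Fin d))
    (hK : ∀ x ∈ B, ∀ h : ℝ, 0 ≤ h → h < H →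
      ∀ u : EuclideanSpace ℝ (Fin d), InBall i (2 * R₀) x u →
        (∀ idx : Fin s, ‖K u h idx - f x‖ ≤ L₀ * ‖i x‖ / R₀) ∧
        ∀ idx : Fin s, K u h idx = f (u + h • ∑ j : Fin s, a idx j • K u h j))
    (hK0 : ∀ x ∈ B, ∀ u : EuclideanSpace ℝ (Fin d), InBall i (2 * R₀) x u →
      ∀ idx : Fin s, K u 0 idx = f u)
    (ftil : EuclideanSpace ℝ (Fin d) → ℝ → EuclideanSpace ℝ (Fin d))
    (hftil : ∀ (u : EuclideanSpace ℝ (Fin d)) (h : ℝ), ftil u h = ∑ idx : Fin s, b idx • K u h idx) :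
    (∀ x ∈ B, ftil x 0 = f x) ∧
    ∀ x ∈ B, ∀ h : ℝ, 0 ≤ h → h < H →
      (∀ u v : EuclideanSpace ℝ (Fin d), InBall i R x u → InBall i R x v →
        ‖ftil u h - ftil v h‖ ≤ L * ‖u - v‖) ∧
      ‖ftil x h - ftil x 0‖ ≤ L * h * ‖i x‖ :=
  runge_kutta_ftil_consistency_lipschitz_general f i B R₀ L₀ C₁ hR₀ hL₀ hflip hfC a b hb A₁ A₂ hA₁
    hA₂ R L H hRdef hLdef hHdef K hK hK0 ftil hftil
end
end
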